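/- arXiv:1708.02193 — 4 statements merged into one kernel-verified Lean document; each statement's English description precedes it below -/
import Mathlib

section
/- For the almost-identical-firms oligopoly system dqi/dt = qi(f - εi qi - Σ_{j≠i} qj), the polynomial F4 = (ε1 - 1)q1 - (ε2 - 1)q2 is a Darboux polynomial with cofactor P4 = f - ε1 q1 - ε2 q2 - q3. -/
open MvPolynomial

theorem almost_identical_darboux_F4 (f ε1 ε2 ε3 : ℝ) :
    let q1 : MvPolynomial (Fin 3) ℝ := X 0
    let q2 : MvPolynomial (Fin 3) ℝ := X 1
    let q3 : MvPolynomial (Fin 3) ℝ := X 2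
    let V : Fin 3 → MvPolynomial (Fin 3) ℝ :=
      ![q1 * (C f - C ε1 * q1 - q2 - q3),
        q2 * (C f - q1 - C ε2 * q2 - q3),
        q3 * (C f - q1 - q2 - C ε3 * q3)]
    (∑ i, V i * pderiv i (C (ε1 - 1) * q1 - C (ε2 - 1) * q2)) =
      (C f - C ε1 * q1 - C ε2 * q2 - q3) * (C (ε1 - 1) * q1 - C (ε2 - 1) * q2) := by
  intro q1 q2 q3 V
  simp only [q1, q2, q3, V, Fin.sum_univ_three, Matrix.cons_val_zero, Matrix.cons_val_one,
    Matrix.head_cons, Matrix.cons_val_two, Matrix.tail_cons, map_sub, map_mul,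
    pderiv_C, pderiv_X, Pi.single_apply, Fin.ext_iff]
  norm_num [Fin.ext_iff]
  ring
end

section
/- For the symmetric oligopoly system dqi/dt = qi(f - 2qi - Σ_{j≠i} qj), the function I1 = q1(q2 - q3)/(q3(q1 - q2)) is a first integral: its derivative along any solution with q3(q1 - q2) ≠ 0 is zero. -/
/-!
With `g = f - q1 - q2 - q3`, each species obeys `qᵢ' = qᵢ (g - qᵢ)`, so a difference obeys
`(qᵢ - qⱼ)' = (qᵢ - qⱼ) (g - qᵢ - qⱼ)`. Hence the numerator `q1 (q2 - q3)` and the denominator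
`q3 (q1 - q2)` of the first integral both have logarithmic derivative `2g - q1 - q2 - q3`, and
their quotient has derivative zero.
-/

namespace HasDerivAt

variable {𝕜 : Type*} [NontriviallyNormedField 𝕜] {x y : 𝕜 → 𝕜} {t a b : 𝕜}

theorem mul_of_rates (hx : HasDerivAt x (x t * a) t) (hy : HasDerivAt y (y t * b) t) :
    HasDerivAt (fun s => x s * y s) (x t * y t * (a + b)) t :=
  (hx.mul hy).congr_deriv (by ring)

theorem sub_of_logistic (hx : HasDerivAt x (x t * (a - x t)) t)
    (hy : HasDerivAt y (y t * (a - y t)) t) :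
    HasDerivAt (fun s => x s - y s) ((x t - y t) * (a - x t - y t)) t :=
  (hx.sub hy).congr_deriv (by ring)

theorem div_of_same_rate (hx : HasDerivAt x (x t * a) t) (hy : HasDerivAt y (y t * a) t)
    (hy0 : y t ≠ 0) : HasDerivAt (fun s => x s / y s) 0 t :=
  (hx.div hy hy0).congr_deriv (by rw [div_eq_zero_iff]; left; ring)

end HasDerivAt

theorem symmetric_first_integral (f : ℝ) (q1 q2 q3 : ℝ → ℝ)
    (h1 : ∀ t, HasDerivAt q1 (q1 t * (f - 2*q1 t - q2 t - q3 t)) t)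
    (h2 : ∀ t, HasDerivAt q2 (q2 t * (f - q1 t - 2*q2 t - q3 t)) t)
    (h3 : ∀ t, HasDerivAt q3 (q3 t * (f - q1 t - q2 t - 2*q3 t)) t)
    (t : ℝ) (hd : q3 t * (q1 t - q2 t) ≠ 0) :
    HasDerivAt (fun s => q1 s * (q2 s - q3 s) / (q3 s * (q1 s - q2 s))) 0 t := by
  set g := f - q1 t - q2 t - q3 t
  have e1 : HasDerivAt q1 (q1 t * (g - q1 t)) t := (h1 t).congr_deriv (by ring)
  have e2 : HasDerivAt q2 (q2 t * (g - q2 t)) t := (h2 t).congr_deriv (by ring)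
  have e3 : HasDerivAt q3 (q3 t * (g - q3 t)) t := (h3 t).congr_deriv (by ring)
  have hN := e1.mul_of_rates (e2.sub_of_logistic e3)
  have hD := e3.mul_of_rates (e1.sub_of_logistic e2)
  exact hN.div_of_same_rate (hD.congr_deriv (by ring)) hd
end

section
/- For the almost-identical-firms system dqi/dt = qi(f - εi qi - Σ_{j≠i} qj), the function I1 = q3((ε1-1)q1 - (ε2-1)q2) / (q1((ε2-1)q2 - (ε3-1)q3)) is a first integral on the open set where the denominator is nonzero. -/
/-!
Write `g = f - q1 - q2 - q3` and `Lᵢ = (εᵢ - 1) qᵢ`. Then `qᵢ'/qᵢ = g - Lᵢ` and `Lᵢ' = Lᵢ (g - Lᵢ)`, so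
a product `qₖ (Lᵢ - Lⱼ)` with `{i, j, k} = {1, 2, 3}` has logarithmic derivative `2g - L1 - L2 - L3`,
which is symmetric in the indices. Numerator and denominator of `I1` are two such products, so
their quotient is constant.
-/

theorem HasDerivAt.div_eq_zero_of_same_rate {N D : ℝ → ℝ} {c t : ℝ}
    (hN : HasDerivAt N (N t * c) t) (hD : HasDerivAt D (D t * c) t) (hD0 : D t ≠ 0) :
    HasDerivAt (fun s => N s / D s) 0 t :=
  (hN.div hD hD0).congr_deriv (by ring)

theorem HasDerivAt.const_mul_of_logistic {q : ℝ → ℝ} {g k t : ℝ}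
    (hq : HasDerivAt q (q t * (g - k * q t)) t) :
    HasDerivAt (fun s => k * q s) (k * q t * (g - k * q t)) t :=
  (hq.const_mul k).congr_deriv (by ring)

theorem HasDerivAt.mul_sub_of_logistic {u a b : ℝ → ℝ} {g c t : ℝ}
    (hu : HasDerivAt u (u t * (g - c)) t) (ha : HasDerivAt a (a t * (g - a t)) t)
    (hb : HasDerivAt b (b t * (g - b t)) t) :
    HasDerivAt (fun s => u s * (a s - b s)) (u t * (a t - b t) * (2 * g - a t - b t - c)) t :=
  (hu.mul (ha.sub hb)).congr_deriv (by rw [Pi.sub_apply]; ring)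

theorem almost_identical_first_integral (f ε1 ε2 ε3 : ℝ) (q1 q2 q3 : ℝ → ℝ)
    (h1 : ∀ t, HasDerivAt q1 (q1 t * (f - ε1*q1 t - q2 t - q3 t)) t)
    (h2 : ∀ t, HasDerivAt q2 (q2 t * (f - q1 t - ε2*q2 t - q3 t)) t)
    (h3 : ∀ t, HasDerivAt q3 (q3 t * (f - q1 t - q2 t - ε3*q3 t)) t)
    (t : ℝ) (hd : q1 t * ((ε2-1)*q2 t - (ε3-1)*q3 t) ≠ 0) :
    HasDerivAt (fun s => q3 s * ((ε1-1)*q1 s - (ε2-1)*q2 s) /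
      (q1 s * ((ε2-1)*q2 s - (ε3-1)*q3 s))) 0 t := by
  set g := f - q1 t - q2 t - q3 t
  have r1 : HasDerivAt q1 (q1 t * (g - (ε1-1) * q1 t)) t := (h1 t).congr_deriv (by ring)
  have r2 : HasDerivAt q2 (q2 t * (g - (ε2-1) * q2 t)) t := (h2 t).congr_deriv (by ring)
  have r3 : HasDerivAt q3 (q3 t * (g - (ε3-1) * q3 t)) t := (h3 t).congr_deriv (by ring)
  have hN := r3.mul_sub_of_logistic r1.const_mul_of_logistic r2.const_mul_of_logistic
  have hD := r1.mul_sub_of_logistic r2.const_mul_of_logistic r3.const_mul_of_logistic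
  exact hN.div_eq_zero_of_same_rate (hD.congr_deriv (by ring)) hd
end

section
/- On the invariant line q(s) = (s/(ε1-1), s/(ε2-1), s/(ε3-1)), s > 0, the almost-identical-firms oligopoly system reduces to the logistic equation ds/dt = s(f - (1/(ε1-1) + 1/(ε2-1) + ε3/(ε3-1)) s): substituting q(s) into the vector field yields a vector tangent to the line with this scalar speed. -/
theorem invariant_line_logistic (f ε1 ε2 ε3 : ℝ)
    (h1 : 2 < ε1) (h2 : 2 < ε2) (h3 : 2 < ε3) (s : ℝ) :
    let q1 := s / (ε1 - 1)
    let q2 := s / (ε2 - 1)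
    let q3 := s / (ε3 - 1)
    let dsdt := s * (f - (1/(ε1-1) + 1/(ε2-1) + ε3/(ε3-1)) * s)
    q1 * (f - ε1*q1 - q2 - q3) = dsdt * (1/(ε1-1)) ∧
    q2 * (f - q1 - ε2*q2 - q3) = dsdt * (1/(ε2-1)) ∧
    q3 * (f - q1 - q2 - ε3*q3) = dsdt * (1/(ε3-1)) := by
  have e1 : ε1 - 1 ≠ 0 := by linarith
  have e2 : ε2 - 1 ≠ 0 := by linarith
  have e3 : ε3 - 1 ≠ 0 := by linarith
  refine ⟨?_, ?_, ?_⟩ <;> field_simp <;> ring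
end
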